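/- Let k be a field and x₁,…,x₅ ∈ k. Consider the 6×6 antisymmetric matrix G with rows (0,0,0,x₁,0,x₃), (0,0,x₁,2x₂,0,x₄), (0,−x₁,0,0,−x₃,0), (−x₁,−2x₂,0,0,−x₄,0), (0,0,x₃,x₄,0,2x₅), (−x₃,−x₄,0,0,−2x₅,0). Then det(G) = 4·(x₁²x₅ − x₁x₃x₄ + x₂x₃²)². Consequently, if char(k) = 2 then det(G) = 0 for all choices of x₁,…,x₅, while if char(k) ≠ 2 then x₁ = x₅ = 1, x₂ = x₃ = x₄ = 0 gives det(G) = 4 ≠ 0. -/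

import Mathlib

/-!
Coordinates `0, 1, 4` and `2, 3, 5` span complementary Lagrangian subspaces of the form, and
in the reordered basis the Gram matrix becomes `[[0, B], [-B, 0]]` with `B` the symmetric
`3 × 3` pairing between them. Hence `det G = (det B)²`, and expanding `det B` along its first
row gives `det B = -2 (x₁² x₅ - x₁ x₃ x₄ + x₂ x₃²)`: the Pfaffian of `G` carries a factor `2`.
-/

open Matrix

/-- Gram matrix of `σ_λ` for the class `C₃(a₁)` in type `F₄`. -/
def F4C3a1Gram {k : Type*} [Field k] (x₁ x₂ x₃ x₄ x₅ : k) :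
    Matrix (Fin 6) (Fin 6) k :=
  !![0, 0, 0, x₁, 0, x₃;
     0, 0, x₁, 2*x₂, 0, x₄;
     0, -x₁, 0, 0, -x₃, 0;
     -x₁, -2*x₂, 0, 0, -x₄, 0;
     0, 0, x₃, x₄, 0, 2*x₅;
     -x₃, -x₄, 0, 0, -2*x₅, 0]

namespace Matrix

variable {n R : Type*} [Fintype n] [DecidableEq n] [CommRing R]

theorem det_fromBlocks_zero_one_neg_one_zero :
    (fromBlocks 0 1 (-1) 0 : Matrix (n ⊕ n) (n ⊕ n) R).det = 1 := by
  have hLUL : (fromBlocks 0 1 (-1) 0 : Matrix (n ⊕ n) (n ⊕ n) R) =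
      fromBlocks 1 0 (-1) 1 * fromBlocks 1 1 0 1 * fromBlocks 1 0 (-1) 1 := by
    simp [fromBlocks_multiply]
  simp [hLUL]

theorem det_fromBlocks_zero_neg_zero (B : Matrix n n R) :
    (fromBlocks 0 B (-B) 0).det = B.det ^ 2 := by
  have hfactor : fromBlocks 0 B (-B) 0 = fromBlocks B 0 0 B * fromBlocks 0 1 (-1) 0 := by
    simp [fromBlocks_multiply]
  rw [hfactor, det_mul, det_fromBlocks_zero₂₁, det_fromBlocks_zero_one_neg_one_zero, mul_one, sq]

end Matrix

def F4C3a1GramBlock {k : Type*} [Field k] (x₁ x₂ x₃ x₄ x₅ : k) : Matrix (Fin 3) (Fin 3) k :=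
  !![0, x₁, x₃;
     x₁, 2*x₂, x₄;
     x₃, x₄, 2*x₅]

noncomputable def F4C3a1LagrangianSplit : Fin 3 ⊕ Fin 3 ≃ Fin 6 :=
  Equiv.ofBijective (Sum.elim ![0, 1, 4] ![2, 3, 5]) (by decide)

theorem F4C3a1Gram_submatrix_lagrangianSplit {k : Type*} [Field k] (x₁ x₂ x₃ x₄ x₅ : k) :
    (F4C3a1Gram x₁ x₂ x₃ x₄ x₅).submatrix F4C3a1LagrangianSplit F4C3a1LagrangianSplit =
      fromBlocks 0 (F4C3a1GramBlock x₁ x₂ x₃ x₄ x₅) (-F4C3a1GramBlock x₁ x₂ x₃ x₄ x₅) 0 := by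
  ext (i | i) (j | j) <;> fin_cases i <;> fin_cases j <;>
    simp [F4C3a1Gram, F4C3a1GramBlock, F4C3a1LagrangianSplit]

theorem F4C3a1GramBlock_det {k : Type*} [Field k] (x₁ x₂ x₃ x₄ x₅ : k) :
    (F4C3a1GramBlock x₁ x₂ x₃ x₄ x₅).det =
      -2 * (x₁ ^ 2 * x₅ - x₁ * x₃ * x₄ + x₂ * x₃ ^ 2) := by
  rw [F4C3a1GramBlock, det_fin_three]
  simp only [of_apply, cons_val', cons_val_zero, cons_val_one, cons_val, cons_val_fin_one]
  ring

theorem F4C3a1Gram_det_eq {k : Type*} [Field k] (x₁ x₂ x₃ x₄ x₅ : k) :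
    (F4C3a1Gram x₁ x₂ x₃ x₄ x₅).det = 4 * (x₁ ^ 2 * x₅ - x₁ * x₃ * x₄ + x₂ * x₃ ^ 2) ^ 2 := by
  rw [← det_submatrix_equiv_self F4C3a1LagrangianSplit, F4C3a1Gram_submatrix_lagrangianSplit,
    det_fromBlocks_zero_neg_zero, F4C3a1GramBlock_det]
  ring

theorem F4C3a1Gram_det {k : Type*} [Field k] (x₁ x₂ x₃ x₄ x₅ : k) :
    (F4C3a1Gram x₁ x₂ x₃ x₄ x₅).det
        = 4 * (x₁ ^ 2 * x₅ - x₁ * x₃ * x₄ + x₂ * x₃ ^ 2) ^ 2 ∧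
    (ringChar k = 2 → (F4C3a1Gram x₁ x₂ x₃ x₄ x₅).det = 0) ∧
    (ringChar k ≠ 2 →
      (F4C3a1Gram (1 : k) 0 0 0 1).det = 4 ∧
      (F4C3a1Gram (1 : k) 0 0 0 1).det ≠ 0) := by
  have four : (4 : k) = 2 ^ 2 := by norm_num
  refine ⟨F4C3a1Gram_det_eq .., fun hchar => ?_, fun hchar => ?_⟩
  · have two : (2 : k) = 0 := by exact_mod_cast (ringChar.spec k 2).2 (hchar ▸ dvd_rfl)
    rw [F4C3a1Gram_det_eq, four, two]
    ring
  · have hdet : (F4C3a1Gram (1 : k) 0 0 0 1).det = 4 := by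
      rw [F4C3a1Gram_det_eq]
      ring
    exact ⟨hdet, hdet ▸ four ▸ pow_ne_zero 2 (Ring.two_ne_zero hchar)⟩
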